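/- Let P be a simple polytope of dimension d > 1, let u, v be vertices of P that lie on exactly one common facet F, and let x be the unique vertex adjacent to v with x ∉ F. Then the set of facets of P that contain the vertex u or contain the edge joining v and x equals the set of all facets of P that contain u or contain v, and this set has exactly 2d − 1 elements. -/

import Mathlib

/-!
Fix, for every facet `G` of `P`, an inequality `f G ≤ c G` on `P` with equality set `G`.
Every proper face of a polytope lies in a facet (rotate a supporting hyperplane about a face
of codimension at least two until it meets a new vertex), so `P` is the intersection of its
affine hull with these facet halfspaces. Consequently, near a point `m ∈ P` the polytope agrees
with the cone cut out by the facets through `m`; if `m` lies in a face `E`, every direction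
annihilated by the `f G` with `m ∈ G` can be followed both ways from `m` inside `E`, so
`dim P ≤ dim E + #{facets through m}`.

At the midpoint of the edge `vx` this gives at least `d - 1` facets containing the edge. They
are among the `d` facets at `v`, and so is `F`, which misses `x`; hence `F` is the only facet at
`v` not containing the edge. So a facet contains `v` iff it contains the edge or is `F ∋ u`, and
`F` is the one facet shared by the `d` facets at `u` and the `d` facets at `v`.
-/

/-- `P` is a polytope: the convex hull of finitely many points. -/
def IsPolytope {n : ℕ} (P : Set (Fin n → ℝ)) : Prop :=
  ∃ S : Finset (Fin n → ℝ), P = convexHull ℝ (S : Set (Fin n → ℝ))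

/-- A face of `P`: the empty set, `P` itself, or the intersection of `P`
with a supporting hyperplane. -/
def IsFace {n : ℕ} (P F : Set (Fin n → ℝ)) : Prop :=
  F = ∅ ∨ F = P ∨ ∃ (f : (Fin n → ℝ) →ₗ[ℝ] ℝ) (c : ℝ),
    (∀ x ∈ P, f x ≤ c) ∧ F = {x ∈ P | f x = c}

/-- The dimension of a subset of `ℝⁿ`: the rank of its vector span
(i.e., its affine dimension). -/
noncomputable def sdim {n : ℕ} (F : Set (Fin n → ℝ)) : ℕ :=
  Module.finrank ℝ ↥(vectorSpan ℝ F)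

/-- A vertex of `P`: a point whose singleton is a (0-dimensional) face of `P`. -/
def IsVertex {n : ℕ} (P : Set (Fin n → ℝ)) (v : Fin n → ℝ) : Prop :=
  IsFace P {v}

/-- A facet of `P`: a nonempty face of dimension `dim P - 1`. -/
def IsFacet {n : ℕ} (P F : Set (Fin n → ℝ)) : Prop :=
  IsFace P F ∧ F.Nonempty ∧ sdim F + 1 = sdim P

/-- An edge of `P`: a face of dimension 1. -/
def IsEdge {n : ℕ} (P F : Set (Fin n → ℝ)) : Prop :=
  IsFace P F ∧ sdim F = 1

/-- Two vertices are adjacent if they are joined by an edge. -/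
def Adjacent {n : ℕ} (P : Set (Fin n → ℝ)) (u v : Fin n → ℝ) : Prop :=
  u ≠ v ∧ ∃ F, IsEdge P F ∧ u ∈ F ∧ v ∈ F

/-- A polytope is simple if every vertex belongs to precisely `dim P` facets. -/
def IsSimplePolytope {n : ℕ} (P : Set (Fin n → ℝ)) : Prop :=
  ∀ v, IsVertex P v → {F | IsFacet P F ∧ v ∈ F}.ncard = sdim P

/-- A polytope is simplicial if every facet contains precisely `dim P` vertices. -/
def IsSimplicialPolytope {n : ℕ} (P : Set (Fin n → ℝ)) : Prop :=
  ∀ F, IsFacet P F → {v | IsVertex P v ∧ v ∈ F}.ncard = sdim P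

/-- Two vertices are complementary if no facet contains both. -/
def Complementary {n : ℕ} (P : Set (Fin n → ℝ)) (u v : Fin n → ℝ) : Prop :=
  ∀ F, IsFacet P F → ¬ (u ∈ F ∧ v ∈ F)

/-- `J` is the join `F ∨ G`: the smallest face of `P` containing both `F` and `G`. -/
def IsJoin {n : ℕ} (P F G J : Set (Fin n → ℝ)) : Prop :=
  IsFace P J ∧ F ⊆ J ∧ G ⊆ J ∧ ∀ J', IsFace P J' → F ⊆ J' → G ⊆ J' → J ⊆ J'

open Set Filter Topology

section LinearAlgebra

variable {K V W : Type*} [Field K] [AddCommGroup V] [Module K V] [AddCommGroup W] [Module K W]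

theorem Submodule.finrank_le_finrank_inf_ker_add [FiniteDimensional K V] [FiniteDimensional K W]
    (U : Submodule K V) (L : V →ₗ[K] W) :
    Module.finrank K U ≤ Module.finrank K ↥(U ⊓ LinearMap.ker L) + Module.finrank K W := by
  have hker : (LinearMap.ker (L.domRestrict U)).map U.subtype = U ⊓ LinearMap.ker L := by
    rw [LinearMap.ker_domRestrict, Submodule.map_comap_subtype]
  have hrank := (L.domRestrict U).finrank_range_add_finrank_ker
  rw [← hker, ← (Submodule.equivMapOfInjective _ U.injective_subtype _).finrank_eq]
  have := Submodule.finrank_le (LinearMap.range (L.domRestrict U))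
  omega

theorem vectorSpan_le_ker_of_forall_eq {s : Set V} {f : V →ₗ[K] K} {c : K}
    (h : ∀ y ∈ s, f y = c) : vectorSpan K s ≤ LinearMap.ker f := by
  rw [vectorSpan_def, Submodule.span_le]
  rintro w ⟨y, hy, z, hz, rfl⟩
  simp [h y hy, h z hz]

theorem Submodule.exists_functionals_of_finrank_add_two_le [FiniteDimensional K V]
    {A B : Submodule K V} (hAB : A ≤ B)
    (h : Module.finrank K A + 2 ≤ Module.finrank K B) :
    ∃ (b : V) (φ₁ φ₂ : V →ₗ[K] K), b ∈ B ∧ A ≤ LinearMap.ker φ₁ ∧ A ≤ LinearMap.ker φ₂ ∧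
      φ₁ b ≠ 0 ∧ φ₂ b = 0 ∧ ¬ B ≤ LinearMap.ker φ₂ := by
  obtain ⟨b, hbB, hbA⟩ := SetLike.exists_of_lt
    (Submodule.lt_of_le_of_finrank_lt_finrank hAB (by omega))
  have hA'B : A ⊔ K ∙ b ≤ B := sup_le hAB ((Submodule.span_singleton_le_iff_mem _ _).mpr hbB)
  have hA' : Module.finrank K ↥(A ⊔ K ∙ b) < Module.finrank K B := by
    have := Submodule.finrank_add_le_finrank_add_finrank A (K ∙ b)
    have := finrank_span_singleton (K := K) fun h : b = 0 => hbA (h ▸ A.zero_mem)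
    omega
  obtain ⟨b', hb'B, hb'A'⟩ := SetLike.exists_of_lt
    (Submodule.lt_of_le_of_finrank_lt_finrank hA'B hA')
  obtain ⟨φ₁, hφ₁b, hAφ₁⟩ := Submodule.exists_le_ker_of_notMem hbA
  obtain ⟨φ₂, hφ₂b', hA'φ₂⟩ := Submodule.exists_le_ker_of_notMem hb'A'
  exact ⟨b, φ₁, φ₂, hbB, hAφ₁, le_sup_left.trans hA'φ₂, hφ₁b,
    hA'φ₂ (Submodule.mem_sup_right (Submodule.mem_span_singleton_self b)),
    fun hB => hφ₂b' (hB hb'B)⟩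

theorem vectorSpan_convexHull {𝕜 E : Type*} [Ring 𝕜] [PartialOrder 𝕜] [AddCommGroup E]
    [Module 𝕜 E] (s : Set E) : vectorSpan 𝕜 (convexHull 𝕜 s) = vectorSpan 𝕜 s := by
  rw [← direction_affineSpan, affineSpan_convexHull, direction_affineSpan]

end LinearAlgebra

theorem Finset.exists_pos_forall_mul_le_and_eq {ι : Type*} (T : Finset ι) (α β : ι → ℝ)
    (hα : ∀ i ∈ T, 0 ≤ α i) (hαβ : ∀ i ∈ T, 0 < β i → 0 < α i) (hβ : ∃ i ∈ T, 0 < β i) :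
    ∃ t > 0, (∀ i ∈ T, t * β i ≤ α i) ∧ ∃ i ∈ T, 0 < β i ∧ t * β i = α i := by
  classical
  obtain ⟨i₀, hi₀, hβi₀⟩ := hβ
  obtain ⟨j, hj, hjmin⟩ := (T.filter fun i => 0 < β i).exists_min_image (fun i => α i / β i)
    ⟨i₀, Finset.mem_filter.2 ⟨hi₀, hβi₀⟩⟩
  obtain ⟨hjT, hβj⟩ := Finset.mem_filter.1 hj
  have ht : 0 < α j / β j := div_pos (hαβ j hjT hβj) hβj
  refine ⟨α j / β j, ht, fun i hi => ?_, j, hjT, hβj, div_mul_cancel₀ _ hβj.ne'⟩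
  rcases le_or_gt (β i) 0 with hβi | hβi
  · exact (mul_nonpos_of_nonneg_of_nonpos ht.le hβi).trans (hα i hi)
  · exact (le_div_iff₀ hβi).1 (hjmin i (Finset.mem_filter.2 ⟨hi, hβi⟩))

section Faces

variable {n : ℕ} {P F G : Set (Fin n → ℝ)}

theorem IsFace.subset (h : IsFace P F) : F ⊆ P := by
  rcases h with rfl | rfl | ⟨f, c, -, rfl⟩
  exacts [empty_subset _, subset_rfl, fun y hy => hy.1]

theorem IsFace.isExposed (h : IsFace P F) : IsExposed ℝ P F := by
  rcases h with rfl | rfl | ⟨f, c, hle, rfl⟩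
  · exact isExposed_empty
  · exact IsExposed.refl _
  · rintro ⟨x₀, hx₀P, hx₀⟩
    refine ⟨LinearMap.toContinuousLinearMap f, ?_⟩
    ext x
    simp only [mem_ofPred_eq, LinearMap.coe_toContinuousLinearMap']
    exact and_congr_right fun hx =>
      ⟨fun hfx y hy => hfx ▸ hle y hy, fun h => le_antisymm (hle x hx) (hx₀ ▸ h x₀ hx₀P)⟩

theorem IsFace.exists_eq_setOf (h : IsFace P F) (hne : F.Nonempty) (hFP : F ≠ P) :
    ∃ (f : (Fin n → ℝ) →ₗ[ℝ] ℝ) (c : ℝ), (∀ x ∈ P, f x ≤ c) ∧ F = {x ∈ P | f x = c} := by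
  rcases h with rfl | rfl | h
  exacts [absurd hne not_nonempty_empty, absurd rfl hFP, h]

theorem IsFacet.ne (h : IsFacet P F) : F ≠ P := by
  rintro rfl
  exact absurd h.2.2 (by omega)

theorem IsFacet.exists_eq_setOf (h : IsFacet P F) :
    ∃ (f : (Fin n → ℝ) →ₗ[ℝ] ℝ) (c : ℝ), (∀ x ∈ P, f x ≤ c) ∧ F = {x ∈ P | f x = c} :=
  h.1.exists_eq_setOf h.2.1 h.ne

theorem IsFace.sdim_lt (hG : IsFace P G) (hne : G.Nonempty) (hGF : G ⊂ F) (hFP : F ⊆ P) :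
    sdim G < sdim F := by
  obtain ⟨f, c, -, rfl⟩ := hG.exists_eq_setOf hne fun h => hGF.not_subset (h ▸ hFP)
  obtain ⟨y, hyF, hyG⟩ := exists_of_ssubset hGF
  obtain ⟨g, hg⟩ := hne
  by_contra! hle
  have hspan : vectorSpan ℝ F ≤ LinearMap.ker f :=
    (Submodule.eq_of_le_of_finrank_le (vectorSpan_mono ℝ hGF.subset) hle).symm.le.trans
      (vectorSpan_le_ker_of_forall_eq fun z hz => hz.2)
  have hyg : f (y - g) = 0 := hspan (vsub_mem_vectorSpan ℝ hyF (hGF.subset hg))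
  exact hyG ⟨hFP hyF, by rw [map_sub, sub_eq_zero] at hyg; rw [hyg, hg.2]⟩

end Faces

section Polytopes

variable {n : ℕ} {P : Set (Fin n → ℝ)}

theorem setOf_mem_convexHull_eq_convexHull_filter (S : Finset (Fin n → ℝ))
    {f : (Fin n → ℝ) →ₗ[ℝ] ℝ} {c : ℝ} (hle : ∀ s ∈ S, f s ≤ c) :
    {y ∈ convexHull ℝ (S : Set (Fin n → ℝ)) | f y = c} =
      convexHull ℝ ↑(S.filter fun s => f s = c) := by
  classical
  refine Subset.antisymm ?_ (convexHull_min (fun s hs => ?_)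
    ((convex_convexHull ℝ _).inter (convex_hyperplane f.isLinear c)))
  · rintro y ⟨hy, hfy⟩
    rw [Finset.convexHull_eq] at hy
    obtain ⟨w, hw₀, hw₁, rfl⟩ := hy
    have hsum : ∑ s ∈ S, w s * (c - f s) = 0 := by
      have : f (S.centerMass w id) = ∑ s ∈ S, w s * f s := by
        simp [Finset.centerMass_eq_of_sum_1 _ _ hw₁, map_sum]
      simp only [mul_sub, Finset.sum_sub_distrib, ← Finset.sum_mul, hw₁, ← this, hfy, one_mul,
        sub_self]
    have hon : ∀ s ∈ S, w s ≠ 0 → f s = c := by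
      intro s hs hws
      have := (Finset.sum_eq_zero_iff_of_nonneg fun s hs =>
        mul_nonneg (hw₀ s hs) (sub_nonneg.2 (hle s hs))).1 hsum s hs
      linarith [(mul_eq_zero.1 this).resolve_left hws]
    rw [← Finset.centerMass_filter_ne_zero]
    refine Finset.centerMass_mem_convexHull _ (fun s hs => hw₀ s (Finset.mem_filter.1 hs).1)
      (by rw [Finset.sum_filter_ne_zero, hw₁]; exact one_pos) fun s hs => ?_
    obtain ⟨hsS, hws⟩ := Finset.mem_filter.1 hs
    exact Finset.mem_filter.2 ⟨hsS, hon s hsS hws⟩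
  · obtain ⟨hsS, hfs⟩ := Finset.mem_filter.1 hs
    exact ⟨subset_convexHull ℝ _ hsS, hfs⟩

theorem IsPolytope.convex (hP : IsPolytope P) : Convex ℝ P := by
  obtain ⟨S, rfl⟩ := hP
  exact convex_convexHull ℝ _

theorem IsPolytope.isClosed (hP : IsPolytope P) : IsClosed P := by
  obtain ⟨S, rfl⟩ := hP
  exact (S.finite_toSet.isCompact_convexHull (𝕜 := ℝ)).isClosed

theorem IsPolytope.setOf_isFacet_finite (hP : IsPolytope P) : {G | IsFacet P G}.Finite := by
  classical
  obtain ⟨S, rfl⟩ := hP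
  refine (S.powerset.finite_toSet.image
    fun T : Finset (Fin n → ℝ) => convexHull ℝ (T : Set (Fin n → ℝ))).subset ?_
  intro G hG
  obtain ⟨f, c, hle, rfl⟩ := hG.exists_eq_setOf
  exact ⟨S.filter fun s => f s = c, Finset.mem_powerset.2 (Finset.filter_subset _ _),
    (setOf_mem_convexHull_eq_convexHull_filter S fun s hs => hle s (subset_convexHull ℝ _ hs)).symm⟩

theorem exists_rotated_face_ssuperset (S : Finset (Fin n → ℝ)) {f ψ : (Fin n → ℝ) →ₗ[ℝ] ℝ}
    {c : ℝ} (hle : ∀ y ∈ convexHull ℝ (S : Set (Fin n → ℝ)), f y ≤ c) {g₀ : Fin n → ℝ}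
    (hψ : ∀ y ∈ convexHull ℝ (S : Set (Fin n → ℝ)), f y = c → ψ y = ψ g₀)
    (hψS : ∃ s ∈ S, ψ s ≠ ψ g₀) :
    ∃ t ≠ (0 : ℝ), (∀ y ∈ convexHull ℝ (S : Set (Fin n → ℝ)), (f + t • ψ) y ≤ c + t * ψ g₀) ∧
      {y ∈ convexHull ℝ (S : Set (Fin n → ℝ)) | f y = c} ⊂
        {y ∈ convexHull ℝ (S : Set (Fin n → ℝ)) | (f + t • ψ) y = c + t * ψ g₀} := by
  obtain ⟨s₁, hs₁, hψs₁⟩ := hψS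
  have hσ : ψ s₁ - ψ g₀ ≠ 0 := sub_ne_zero.2 hψs₁
  have hS : ∀ s ∈ S, s ∈ convexHull ℝ (S : Set (Fin n → ℝ)) := fun s hs => subset_convexHull ℝ _ hs
  -- the factor `ψ s₁ - ψ g₀` makes the tilt positive at `s₁`, whatever the sign of the deviation
  obtain ⟨t, ht, hts, s₀, hs₀, hβs₀, heq⟩ := Finset.exists_pos_forall_mul_le_and_eq S
    (fun s => c - f s) (fun s => (ψ s₁ - ψ g₀) * (ψ s - ψ g₀))
    (fun s hs => sub_nonneg.2 (hle s (hS s hs)))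
    (fun s hs hβ => sub_pos.2 <| (hle s (hS s hs)).lt_of_ne fun hfs => by
      simp [hψ s (hS s hs) hfs] at hβ)
    ⟨s₁, hs₁, mul_self_pos.2 hσ⟩
  refine ⟨t * (ψ s₁ - ψ g₀), mul_ne_zero ht.ne' hσ, convexHull_min (fun s hs => ?_)
    (convex_halfSpace_le (f + _ • ψ).isLinear _), ⟨fun y ⟨hy, hfy⟩ => ⟨hy, ?_⟩, fun h => ?_⟩⟩
  · have := hts s hs
    show f s + t * (ψ s₁ - ψ g₀) * ψ s ≤ c + t * (ψ s₁ - ψ g₀) * ψ g₀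
    linear_combination this
  · simp [hfy, hψ y hy hfy]
  · obtain ⟨-, hfs₀⟩ := h ⟨hS s₀ hs₀, by
      simp only [LinearMap.add_apply, LinearMap.smul_apply, smul_eq_mul]
      linear_combination heq⟩
    simp [hψ s₀ (hS s₀ hs₀) hfs₀] at hβs₀

theorem IsPolytope.exists_face_ssuperset_of_sdim_add_two_le (hP : IsPolytope P)
    {f : (Fin n → ℝ) →ₗ[ℝ] ℝ} {c : ℝ} (hle : ∀ y ∈ P, f y ≤ c) (hne : {y ∈ P | f y = c}.Nonempty)
    (hdim : sdim {y ∈ P | f y = c} + 2 ≤ sdim P) :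
    ∃ (f' : (Fin n → ℝ) →ₗ[ℝ] ℝ) (c' : ℝ), (∀ y ∈ P, f' y ≤ c') ∧
      {y ∈ P | f y = c} ⊂ {y ∈ P | f' y = c'} ∧ {y ∈ P | f' y = c'} ≠ P := by
  obtain ⟨S, rfl⟩ := hP
  set P := convexHull ℝ (S : Set (Fin n → ℝ))
  set G := {y ∈ P | f y = c}
  obtain ⟨g₀, hg₀⟩ := hne
  obtain ⟨b, φ₁, φ₂, hb, hφ₁, hφ₂, hφ₁b, hφ₂b, hφ₂P⟩ :=
    Submodule.exists_functionals_of_finrank_add_two_le (vectorSpan_mono ℝ (sep_subset P _)) hdim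
  -- Rotating the hyperplane about `G` in the direction of `φ` gives a larger proper face,
  -- unless the rotated functional is constant on `P`.
  have rotate : ∀ φ : (Fin n → ℝ) →ₗ[ℝ] ℝ, vectorSpan ℝ G ≤ LinearMap.ker φ →
      ¬ vectorSpan ℝ P ≤ LinearMap.ker φ →
      (∃ (f' : (Fin n → ℝ) →ₗ[ℝ] ℝ) (c' : ℝ), (∀ y ∈ P, f' y ≤ c') ∧
        G ⊂ {y ∈ P | f' y = c'} ∧ {y ∈ P | f' y = c'} ≠ P) ∨
      ∃ t ≠ (0 : ℝ), vectorSpan ℝ P ≤ LinearMap.ker (f + t • φ) := by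
    intro φ hGφ hPφ
    have hconst : ∀ y ∈ P, f y = c → φ y = φ g₀ := fun y hy hfy =>
      sub_eq_zero.1 (by rw [← map_sub]; exact hGφ (vsub_mem_vectorSpan ℝ ⟨hy, hfy⟩ hg₀))
    have hS : ∃ s ∈ S, φ s ≠ φ g₀ := by
      by_contra! h
      exact hPφ <| vectorSpan_convexHull (𝕜 := ℝ) (S : Set (Fin n → ℝ)) ▸
        vectorSpan_le_ker_of_forall_eq h
    obtain ⟨t, ht, hle', hss⟩ := exists_rotated_face_ssuperset S hle hconst hS
    by_cases hP : {y ∈ P | (f + t • φ) y = c + t * φ g₀} = P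
    · exact Or.inr ⟨t, ht, vectorSpan_le_ker_of_forall_eq fun y hy => (hP.symm ▸ hy : _ ∧ _).2⟩
    · exact Or.inl ⟨_, _, hle', hss, hP⟩
  rcases rotate φ₁ hφ₁ (fun h => hφ₁b (h hb)) with h | ⟨t₁, ht₁, h₁⟩
  · exact h
  rcases rotate φ₂ hφ₂ hφ₂P with h | ⟨t₂, ht₂, h₂⟩
  · exact h
  have e₁ : f b + t₁ * φ₁ b = 0 := h₁ hb
  have e₂ : f b + t₂ * φ₂ b = 0 := h₂ hb
  rw [hφ₂b, mul_zero, add_zero] at e₂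
  exact absurd (by simpa [e₂] using e₁) (mul_ne_zero ht₁ hφ₁b)

theorem IsPolytope.exists_isFacet_superset (hP : IsPolytope P) {G : Set (Fin n → ℝ)}
    (hG : IsFace P G) (hne : G.Nonempty) (hGP : G ≠ P) : ∃ H, IsFacet P H ∧ G ⊆ H := by
  have hlt : sdim G < sdim P := hG.sdim_lt hne (hG.subset.ssubset_of_ne hGP) subset_rfl
  by_cases hfacet : sdim G + 1 = sdim P
  · exact ⟨G, ⟨hG, hne, hfacet⟩, subset_rfl⟩
  obtain ⟨f, c, hle, rfl⟩ := hG.exists_eq_setOf hne hGP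
  obtain ⟨f', c', hle', hss, hne'⟩ :=
    IsPolytope.exists_face_ssuperset_of_sdim_add_two_le hP hle hne (by omega)
  have hG' : IsFace P {y ∈ P | f' y = c'} := Or.inr (Or.inr ⟨f', c', hle', rfl⟩)
  have := hG.sdim_lt hne hss (sep_subset _ _)
  have := hG'.sdim_lt (hne.mono hss.subset) ((sep_subset _ _).ssubset_of_ne hne') subset_rfl
  obtain ⟨H, hH, hG'H⟩ := IsPolytope.exists_isFacet_superset hP hG' (hne.mono hss.subset) hne'
  exact ⟨H, hH, hss.subset.trans hG'H⟩
termination_by sdim P - sdim G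

end Polytopes

section Separation

variable {E : Type*} [TopologicalSpace E] [AddCommGroup E] [Module ℝ E] [ContinuousSMul ℝ E]

theorem exists_smul_mem_sdiff_interior {Q : Set E} (hQ : IsClosed Q) (h0 : (0 : E) ∈ Q) {v : E}
    (hv : v ∉ Q) : ∃ t ∈ Ico (0 : ℝ) 1, t • v ∈ Q ∧ t • v ∉ interior Q := by
  by_contra! h
  have hγ : Continuous fun t : ℝ => t • v := continuous_id.smul continuous_const
  obtain ⟨t, -, hint, hout⟩ := isPreconnected_Icc (a := (0 : ℝ)) (b := 1)
    ((fun t : ℝ => t • v) ⁻¹' interior Q) ((fun t : ℝ => t • v) ⁻¹' Qᶜ)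
    (isOpen_interior.preimage hγ) (hQ.isOpen_compl.preimage hγ)
    (fun t ht => by
      by_cases htQ : t • v ∈ Q
      · exact .inl (h t ⟨ht.1, ht.2.lt_of_ne fun h1 => hv (by simpa [h1] using htQ)⟩ htQ)
      · exact .inr htQ)
    ⟨0, left_mem_Icc.2 zero_le_one, h 0 ⟨le_rfl, one_pos⟩ (by simpa using h0)⟩
    ⟨1, right_mem_Icc.2 zero_le_one, by simpa using hv⟩
  exact hout (interior_subset hint)

theorem exists_forall_le_and_lt_of_notMem_interior [IsTopologicalAddGroup E] {Q : Set E}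
    (hQ : Convex ℝ Q) {a z : E} (ha : a ∈ interior Q) (hz : z ∉ interior Q) :
    ∃ f : StrongDual ℝ E, (∀ b ∈ Q, f b ≤ f z) ∧ f a < f z := by
  obtain ⟨f, hf⟩ := geometric_hahn_banach_open_point hQ.interior isOpen_interior hz
  refine ⟨f, fun b hb => ?_, hf a ha⟩
  have hb' : b ∈ closure (interior Q) := by
    rw [hQ.closure_interior_eq_closure_of_nonempty_interior ⟨a, ha⟩]
    exact subset_closure hb
  exact closure_minimal (fun b hb => (hf b hb).le) (isClosed_le f.continuous continuous_const) hb'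

end Separation

section RelativeInterior

variable {n : ℕ} {P : Set (Fin n → ℝ)} {p : Fin n → ℝ}

theorem eventually_add_mem_of_mem_intrinsicInterior (hp : p ∈ intrinsicInterior ℝ P) :
    ∀ᶠ w in 𝓝 (0 : Fin n → ℝ), w ∈ vectorSpan ℝ P → p + w ∈ P := by
  obtain ⟨p', hp', rfl⟩ := hp
  obtain ⟨ε, hε, hball⟩ := Metric.mem_nhds_iff.1 (mem_interior_iff_mem_nhds.1 hp')
  filter_upwards [Metric.ball_mem_nhds 0 hε] with w hw hwV
  have hmem : ↑p' + w ∈ affineSpan ℝ P := by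
    simpa [vadd_eq_add, add_comm] using AffineSubspace.vadd_mem_of_mem_direction
      ((direction_affineSpan ℝ P).symm ▸ hwV) p'.2
  exact hball (show (⟨_, hmem⟩ : affineSpan ℝ P) ∈ Metric.ball p' ε by
    simpa [Metric.mem_ball, Subtype.dist_eq, dist_eq_norm] using hw)

theorem eq_of_forall_le_of_mem_intrinsicInterior {f : (Fin n → ℝ) →ₗ[ℝ] ℝ} {c : ℝ}
    (hle : ∀ y ∈ P, f y ≤ c) (hp : p ∈ intrinsicInterior ℝ P) (hfp : f p = c) {q : Fin n → ℝ}
    (hq : q ∈ P) : f q = c := by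
  have hpq : p - q ∈ vectorSpan ℝ P := vsub_mem_vectorSpan ℝ (intrinsicInterior_subset hp) hq
  have hev : ∀ᶠ t in 𝓝 (0 : ℝ), p + t • (p - q) ∈ P := by
    have hγ : Continuous fun t : ℝ => t • (p - q) := continuous_id.smul continuous_const
    have := (hγ.tendsto' 0 0 (zero_smul ℝ _)).eventually
      (eventually_add_mem_of_mem_intrinsicInterior hp)
    exact this.mono fun t ht => ht (Submodule.smul_mem _ t hpq)
  obtain ⟨t, hPt, ht⟩ := ((hev.filter_mono nhdsWithin_le_nhds).and self_mem_nhdsWithin).exists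
    (f := 𝓝[>] (0 : ℝ))
  have := hle _ hPt
  simp only [map_add, map_smul, map_sub, smul_eq_mul, hfp] at this
  nlinarith [hle q hq, show (0 : ℝ) < t from ht]

theorem exists_supporting_functional_on_segment (hPc : Convex ℝ P) (hPcl : IsClosed P)
    (hp : p ∈ intrinsicInterior ℝ P) {y : Fin n → ℝ} (hy : y ∈ affineSpan ℝ P) (hyP : y ∉ P) :
    ∃ t ∈ Ico (0 : ℝ) 1, p + t • (y - p) ∈ P ∧ ∃ ℓ : (Fin n → ℝ) →ₗ[ℝ] ℝ,
      (∀ q ∈ P, ℓ q ≤ ℓ (p + t • (y - p))) ∧ ℓ p < ℓ (p + t • (y - p)) := by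
  set V := vectorSpan ℝ P
  have hpP := intrinsicInterior_subset hp
  have hsub : ∀ q ∈ P, q - p ∈ V := fun q hq => vsub_mem_vectorSpan ℝ hq hpP
  -- work in `V`, where `P - p` has nonempty interior
  set Q : Set V := {q | p + (q : Fin n → ℝ) ∈ P}
  have hQc : Convex ℝ Q := (hPc.translate_preimage_right p).linear_preimage V.subtype
  have hQcl : IsClosed Q := hPcl.preimage (continuous_const.add continuous_subtype_val)
  have h0 : (0 : V) ∈ interior Q := by
    refine mem_interior_iff_mem_nhds.2 ?_
    have := (continuous_subtype_val.tendsto (0 : V)).eventually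
      (eventually_add_mem_of_mem_intrinsicInterior hp)
    exact this.mono fun q hq => hq q.2
  have hyV : y - p ∈ V := by
    simpa [vsub_eq_sub, direction_affineSpan] using
      AffineSubspace.vsub_mem_direction hy (subset_affineSpan ℝ P hpP)
  obtain ⟨t, ht, htQ, htint⟩ := exists_smul_mem_sdiff_interior hQcl (interior_subset h0)
    (v := ⟨y - p, hyV⟩) (by simpa [Q] using hyP)
  obtain ⟨ℓ', hℓ'Q, hℓ'0⟩ := exists_forall_le_and_lt_of_notMem_interior hQc h0 htint
  obtain ⟨ℓ, hℓ⟩ := LinearMap.exists_extend (ℓ' : V →ₗ[ℝ] ℝ)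
  have hℓV : ∀ w (hw : w ∈ V), ℓ w = ℓ' ⟨w, hw⟩ := fun w hw => congr($hℓ ⟨w, hw⟩)
  have hℓz : ℓ (p + t • (y - p)) = ℓ p + ℓ' (t • ⟨y - p, hyV⟩) := by
    rw [map_add, hℓV _ (V.smul_mem t hyV)]
    rfl
  refine ⟨t, ht, htQ, ℓ, fun q hq => ?_, by simpa [hℓz] using hℓ'0⟩
  have := hℓ'Q ⟨q - p, hsub q hq⟩ (by simpa [Q] using hq)
  rw [hℓz, ← hℓV _ (hsub q hq), map_sub] at *
  linarith

end RelativeInterior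

section FacetInequalities

variable {n : ℕ} {P : Set (Fin n → ℝ)}

def IsFacetPresentation (P : Set (Fin n → ℝ)) (f : Set (Fin n → ℝ) → (Fin n → ℝ) →ₗ[ℝ] ℝ)
    (c : Set (Fin n → ℝ) → ℝ) : Prop :=
  ∀ G, IsFacet P G → (∀ x ∈ P, f G x ≤ c G) ∧ G = {x ∈ P | f G x = c G}

theorem exists_isFacetPresentation (P : Set (Fin n → ℝ)) :
    ∃ f c, IsFacetPresentation P f c := by
  have : ∀ G, ∃ (f : (Fin n → ℝ) →ₗ[ℝ] ℝ) (c : ℝ),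
      IsFacet P G → (∀ x ∈ P, f x ≤ c) ∧ G = {x ∈ P | f x = c} := fun G => by
    by_cases hG : IsFacet P G
    · obtain ⟨f, c, h⟩ := hG.exists_eq_setOf
      exact ⟨f, c, fun _ => h⟩
    · exact ⟨0, 0, fun h => absurd h hG⟩
  choose f c hfc using this
  exact ⟨f, c, hfc⟩

theorem IsPolytope.mem_of_forall_isFacet_le (hP : IsPolytope P)
    {f : Set (Fin n → ℝ) → (Fin n → ℝ) →ₗ[ℝ] ℝ} {c : Set (Fin n → ℝ) → ℝ}
    (hfc : IsFacetPresentation P f c) {y : Fin n → ℝ} (hy : y ∈ affineSpan ℝ P)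
    (hyf : ∀ G, IsFacet P G → f G y ≤ c G) : y ∈ P := by
  by_contra hyP
  obtain ⟨p, hp⟩ := ((affineSpan_nonempty ℝ).1 ⟨y, hy⟩).intrinsicInterior hP.convex
  have hpP := intrinsicInterior_subset hp
  obtain ⟨t, ht, hzP, ℓ, hℓ, hℓp⟩ :=
    exists_supporting_functional_on_segment hP.convex hP.isClosed hp hy hyP
  set z := p + t • (y - p)
  -- The supporting hyperplane at `z` gives a facet `H ∋ z`. But `p` satisfies the inequality
  -- of `H` strictly and `y` satisfies it, so `z` satisfies it strictly as `t < 1`.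
  have hface : IsFace P {q ∈ P | ℓ q = ℓ z} := Or.inr (Or.inr ⟨ℓ, ℓ z, hℓ, rfl⟩)
  obtain ⟨H, hH, hzH⟩ := hP.exists_isFacet_superset hface ⟨z, hzP, rfl⟩
    fun h => hℓp.ne (h.symm ▸ hpP : p ∈ {q ∈ P | ℓ q = ℓ z}).2
  obtain ⟨hleH, hHeq⟩ := hfc H hH
  have hzc : f H z = c H := (hHeq ▸ hzH ⟨hzP, rfl⟩ : z ∈ {x ∈ P | f H x = c H}).2
  have hpc : f H p < c H := (hleH p hpP).lt_of_ne fun hpc => hH.ne <| hHeq.trans <|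
    Subset.antisymm (sep_subset _ _) fun q hq =>
      ⟨hq, eq_of_forall_le_of_mem_intrinsicInterior hleH hp hpc hq⟩
  have hyc := hyf H hH
  simp only [z, map_add, map_smul, map_sub, smul_eq_mul] at hzc
  nlinarith [ht.1, ht.2]

theorem IsPolytope.eventually_add_mem (hP : IsPolytope P)
    {f : Set (Fin n → ℝ) → (Fin n → ℝ) →ₗ[ℝ] ℝ} {c : Set (Fin n → ℝ) → ℝ}
    (hfc : IsFacetPresentation P f c) {m : Fin n → ℝ} (hm : m ∈ P) :
    ∀ᶠ w in 𝓝 (0 : Fin n → ℝ), w ∈ vectorSpan ℝ P →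
      (∀ G, IsFacet P G → m ∈ G → f G w = 0) → m + w ∈ P := by
  have hstrict : ∀ᶠ w in 𝓝 (0 : Fin n → ℝ), ∀ G ∈ {G | IsFacet P G}, m ∉ G →
      f G (m + w) < c G := by
    refine (eventually_all_finite hP.setOf_isFacet_finite).2 fun G hG => ?_
    by_cases hmG : m ∈ G
    · exact .of_forall fun _ h => absurd hmG h
    have hlt : f G m < c G := ((hfc G hG).1 m hm).lt_of_ne fun h => hmG ((hfc G hG).2 ▸ ⟨hm, h⟩)
    have hcont : Continuous fun w => f G (m + w) :=
      (f G).continuous_of_finiteDimensional.comp (continuous_const.add continuous_id)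
    exact .mono ((hcont.tendsto' 0 _ (by simp)).eventually_lt_const hlt) fun _ h _ => h
  filter_upwards [hstrict] with w hw hwV hwf
  refine hP.mem_of_forall_isFacet_le hfc ?_ fun G hG => ?_
  · simpa [vadd_eq_add, add_comm] using AffineSubspace.vadd_mem_of_mem_direction
      ((direction_affineSpan ℝ P).symm ▸ hwV) (subset_affineSpan ℝ P hm)
  · by_cases hmG : m ∈ G
    · have hmc : f G m = c G := ((hfc G hG).2 ▸ hmG : m ∈ {x ∈ P | f G x = c G}).2
      rw [map_add, hwf G hG hmG, add_zero, hmc]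
    · exact (hw G hG hmG).le

theorem IsPolytope.sdim_le_sdim_add_ncard (hP : IsPolytope P) {E : Set (Fin n → ℝ)}
    (hE : IsFace P E) {m : Fin n → ℝ} (hm : m ∈ E) :
    sdim P ≤ sdim E + {G | IsFacet P G ∧ m ∈ G}.ncard := by
  obtain ⟨f, c, hfc⟩ := exists_isFacetPresentation P
  set T := {G | IsFacet P G ∧ m ∈ G}
  have : Fintype T := (hP.setOf_isFacet_finite.subset fun G hG => hG.1).fintype
  set L : (Fin n → ℝ) →ₗ[ℝ] (T → ℝ) := LinearMap.pi fun G => f G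
  -- near `m`, moving inside `ker L` keeps us in `P`, and by symmetry inside `E`
  have hW : vectorSpan ℝ P ⊓ LinearMap.ker L ≤ vectorSpan ℝ E := by
    intro w hw
    obtain ⟨hwV, hwL⟩ := Submodule.mem_inf.1 hw
    have hker : ∀ t : ℝ, ∀ G, IsFacet P G → m ∈ G → f G (t • w) = 0 := fun t G hG hmG => by
      rw [map_smul, show f G w = 0 from congr_fun hwL ⟨G, hG, hmG⟩, smul_zero]
    have hγ : Continuous fun t : ℝ => t • w := continuous_id.smul continuous_const
    have hev : ∀ᶠ t in 𝓝 (0 : ℝ), m + t • w ∈ P ∧ m + (-t) • w ∈ P := by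
      have h := hP.eventually_add_mem hfc (hE.subset hm)
      refine ((hγ.tendsto' 0 0 (zero_smul ℝ w)).eventually h).and
        ((hγ.comp continuous_neg).tendsto' 0 0 (by simp) |>.eventually h) |>.mono ?_
      exact fun t ⟨h₁, h₂⟩ => ⟨h₁ (Submodule.smul_mem _ t hwV) (hker t),
        h₂ (Submodule.smul_mem _ (-t) hwV) (hker (-t))⟩
    obtain ⟨t, ⟨h₁, h₂⟩, ht⟩ := ((hev.filter_mono nhdsWithin_le_nhds).and
      self_mem_nhdsWithin).exists (f := 𝓝[≠] (0 : ℝ))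
    have hmid : m ∈ openSegment ℝ (m + t • w) (m + (-t) • w) := by
      refine ⟨1 / 2, 1 / 2, by norm_num, by norm_num, by norm_num, ?_⟩
      module
    have hext := hE.isExposed.isExtreme
    have hdiff := vsub_mem_vectorSpan ℝ (hext.left_mem_of_mem_openSegment h₁ h₂ hm hmid)
      (hext.right_mem_of_mem_openSegment h₁ h₂ hm hmid)
    have hw2 : w = (2 * t)⁻¹ • ((m + t • w) -ᵥ (m + (-t) • w)) := by
      rw [vsub_eq_sub, show m + t • w - (m + (-t) • w) = (2 * t) • w by module, smul_smul,
        inv_mul_cancel₀ (mul_ne_zero two_ne_zero ht), one_smul]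
    exact hw2 ▸ Submodule.smul_mem _ _ hdiff
  calc sdim P ≤ Module.finrank ℝ ↥(vectorSpan ℝ P ⊓ LinearMap.ker L) + Module.finrank ℝ (T → ℝ) :=
        Submodule.finrank_le_finrank_inf_ker_add _ L
    _ ≤ sdim E + T.ncard := by
        rw [Module.finrank_fintype_fun_eq_card, ← Nat.card_eq_fintype_card, Nat.card_coe_set_eq]
        exact Nat.add_le_add_right (Submodule.finrank_mono hW) _

end FacetInequalities

theorem IsSimplePolytope.eq_of_notMem_edge {n : ℕ} {P : Set (Fin n → ℝ)}
    (hsimple : IsSimplePolytope P) (hP : IsPolytope P) {v x : Fin n → ℝ} (hv : IsVertex P v)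
    {E : Set (Fin n → ℝ)} (hE : IsEdge P E) (hvE : v ∈ E) (hxE : x ∈ E)
    {G G' : Set (Fin n → ℝ)} (hG : IsFacet P G) (hvG : v ∈ G) (hxG : x ∉ G)
    (hG' : IsFacet P G') (hvG' : v ∈ G') (hxG' : x ∉ G') : G = G' := by
  have hvP := hE.1.subset hvE
  have hxP := hE.1.subset hxE
  set m := midpoint ℝ v x
  have hmv : ∀ H, IsFacet P H → m ∈ H → v ∈ H ∧ x ∈ H := fun H hH hmH =>
    ⟨hH.1.isExposed.isExtreme.left_mem_of_mem_openSegment hvP hxP hmH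
      (midpoint_mem_openSegment v x),
     hH.1.isExposed.isExtreme.right_mem_of_mem_openSegment hvP hxP hmH
      (midpoint_mem_openSegment v x)⟩
  set M := {H | IsFacet P H ∧ m ∈ H}
  have hfin := hP.setOf_isFacet_finite
  have hM : sdim P ≤ 1 + M.ncard := hE.2 ▸ hP.sdim_le_sdim_add_ncard hE.1
    ((hE.1.isExposed.convex hP.convex).segment_subset hvE hxE (midpoint_mem_segment v x))
  -- the at least `d - 1` facets through `m`, together with `G`, exhaust the `d` facets at `v`
  have hsub : insert G M ⊆ {H | IsFacet P H ∧ v ∈ H} :=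
    insert_subset ⟨hG, hvG⟩ fun H hH => ⟨hH.1, (hmv H hH.1 hH.2).1⟩
  have hGM : G ∉ M := fun h => hxG (hmv G hG h.2).2
  have hfinM : M.Finite := hfin.subset fun H hH => hH.1
  have heq := eq_of_subset_of_ncard_le hsub
    (by rw [hsimple v hv, ncard_insert_of_notMem hGM hfinM]; omega)
    (hfin.subset fun H hH => hH.1)
  have : G' ∈ insert G M := heq ▸ ⟨hG', hvG'⟩
  exact (this.resolve_right fun h => hxG' (hmv G' hG' h.2).2).symm

theorem stmt6_general {n d : ℕ} (P : Set (Fin n → ℝ))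
    (hP : IsPolytope P) (hdim : sdim P = d) (hsimple : IsSimplePolytope P)
    (u v : Fin n → ℝ) (hu : IsVertex P u) (hv : IsVertex P v)
    (F : Set (Fin n → ℝ)) (hF : IsFacet P F) (huF : u ∈ F) (hvF : v ∈ F)
    (huniq : ∀ G, IsFacet P G → u ∈ G → v ∈ G → G = F)
    (x : Fin n → ℝ) (hadj : Adjacent P v x) (hxF : x ∉ F) :
    {G | IsFacet P G ∧ (u ∈ G ∨ segment ℝ v x ⊆ G)} =
      {G | IsFacet P G ∧ (u ∈ G ∨ v ∈ G)} ∧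
    {G | IsFacet P G ∧ (u ∈ G ∨ segment ℝ v x ⊆ G)}.ncard = 2 * d - 1 := by
  obtain ⟨-, E, hE, hvE, hxE⟩ := hadj
  have hset : {G | IsFacet P G ∧ (u ∈ G ∨ segment ℝ v x ⊆ G)} =
      {G | IsFacet P G ∧ (u ∈ G ∨ v ∈ G)} := by
    ext G
    refine and_congr_right fun hG => or_congr_right' fun huG =>
      ⟨fun h => h (left_mem_segment ℝ v x), fun hvG => ?_⟩
    by_cases hxG : x ∈ G
    · exact (hG.1.isExposed.convex hP.convex).segment_subset hvG hxG
    · exact absurd (hsimple.eq_of_notMem_edge hP hv hE hvE hxE hG hvG hxG hF hvF hxF ▸ huF) huG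
  set Au := {G | IsFacet P G ∧ u ∈ G}
  set Av := {G | IsFacet P G ∧ v ∈ G}
  have hunion : {G | IsFacet P G ∧ (u ∈ G ∨ v ∈ G)} = Au ∪ Av := by
    ext G; simp only [Au, Av, mem_union, mem_ofPred_eq, and_or_left]
  have hinter : Au ∩ Av = {F} := by
    ext G
    exact ⟨fun ⟨⟨hG, huG⟩, _, hvG⟩ => huniq G hG huG hvG, fun h => h ▸ ⟨⟨hF, huF⟩, hF, hvF⟩⟩
  have hfin := hP.setOf_isFacet_finite
  have hcard := ncard_union_add_ncard_inter Au Av (hfin.subset fun G hG => hG.1)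
    (hfin.subset fun G hG => hG.1)
  rw [hinter, ncard_singleton, hsimple u hu, hsimple v hv, ← hunion] at hcard
  exact ⟨hset, by rw [hset, ← hdim]; omega⟩

theorem stmt6 {n d : ℕ} (hd : 1 < d) (P : Set (Fin n → ℝ))
    (hP : IsPolytope P) (hdim : sdim P = d) (hsimple : IsSimplePolytope P)
    (u v : Fin n → ℝ) (hu : IsVertex P u) (hv : IsVertex P v)
    (F : Set (Fin n → ℝ)) (hF : IsFacet P F) (huF : u ∈ F) (hvF : v ∈ F)
    (huniq : ∀ G, IsFacet P G → u ∈ G → v ∈ G → G = F)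
    (x : Fin n → ℝ) (hx : IsVertex P x) (hadj : Adjacent P v x) (hxF : x ∉ F) :
    {G | IsFacet P G ∧ (u ∈ G ∨ segment ℝ v x ⊆ G)} =
      {G | IsFacet P G ∧ (u ∈ G ∨ v ∈ G)} ∧
    {G | IsFacet P G ∧ (u ∈ G ∨ segment ℝ v x ⊆ G)}.ncard = 2 * d - 1 :=
  stmt6_general P hP hdim hsimple u v hu hv F hF huF hvF huniq x hadj hxF
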